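/- For any integer r > 1, n₂*(2r+1) ≤ 2·n₂(r−1) + 2·n₂(r) + 4. -/

import Mathlib

open Pointwise

/-- `IsBasisRange k n` : there is an additive 2-basis `{0 = a₀ < ⋯ < a_k}`
of nonnegative integers whose sumset covers `[0, n]`. -/
def IsBasisRange (k n : ℕ) : Prop :=
  ∃ a : ℕ → ℕ, a 0 = 0 ∧ (∀ m < k, a m < a (m + 1)) ∧
    Finset.Icc 0 n ⊆ ((Finset.range (k + 1)).image a) + ((Finset.range (k + 1)).image a)

/-- `n2max k` is the maximal range of an additive 2-basis with `k` nonzero elements. -/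
noncomputable def n2max (k : ℕ) : ℕ := sSup {n | IsBasisRange k n}

/-- `IsRestrictedBasisRange k n` : there is a restricted basis of length `k`
with range `n = 2 a_k`. -/
def IsRestrictedBasisRange (k n : ℕ) : Prop :=
  ∃ a : ℕ → ℕ, a 0 = 0 ∧ (∀ m < k, a m < a (m + 1)) ∧
    Finset.Icc 0 n ⊆ ((Finset.range (k + 1)).image a) + ((Finset.range (k + 1)).image a) ∧
    n = 2 * a k

/-- `n2star k` is the maximal range among restricted bases of length `k`. -/
noncomputable def n2star (k : ℕ) : ℕ := sSup {n | IsRestrictedBasisRange k n}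

/-!
Cut a restricted basis `0 = a₀ < ⋯ < a_{2r+1}` after `a_{r+1}`. Sums reaching below `a_{r+1}` use
only `a₀, …, a_r`, so `a_{r+1} ≤ n₂(r) + 1`. Sums reaching above `a_{2r+1} + a_{r+1}` use only the
top `r` elements, and reflecting `x ↦ a_{2r+1} - x` turns these into a basis of length `r - 1`, so
`a_{2r+1} - a_{r+1} ≤ n₂(r - 1) + 1`. Adding the two bounds bounds the range `2 a_{2r+1}`.
-/

open Finset

lemma mem_sumset_image_range_iff {a : ℕ → ℕ} {k x : ℕ} :
    x ∈ (range (k + 1)).image a + (range (k + 1)).image a ↔ ∃ i ≤ k, ∃ j ≤ k, a i + a j = x := by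
  simp [Finset.mem_add]

lemma bddAbove_isBasisRange (k : ℕ) : BddAbove {n | IsBasisRange k n} := by
  refine ⟨(k + 1) * (k + 1), ?_⟩
  rintro n ⟨a, -, -, hcov⟩
  have hcard : ((range (k + 1)).image a).card ≤ k + 1 :=
    card_image_le.trans_eq (card_range _)
  have := calc
    n + 1 = (Icc 0 n).card := by simp
    _ ≤ ((range (k + 1)).image a + (range (k + 1)).image a).card := card_le_card hcov
    _ ≤ ((range (k + 1)).image a).card * ((range (k + 1)).image a).card := card_add_le
    _ ≤ (k + 1) * (k + 1) := Nat.mul_le_mul hcard hcard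
  exact Nat.le_of_succ_le this

lemma IsBasisRange.le_n2max {k n : ℕ} (h : IsBasisRange k n) : n ≤ n2max k :=
  le_csSup (bddAbove_isBasisRange k) h

section RestrictedBasis

variable {a : ℕ → ℕ} {k j : ℕ} (hinc : ∀ m < k, a m < a (m + 1))
  (hcov : Icc 0 (2 * a k) ⊆ (range (k + 1)).image a + (range (k + 1)).image a)
include hinc hcov

lemma isBasisRange_prefix (h0 : a 0 = 0) (hj : j < k) : IsBasisRange j (a (j + 1) - 1) := by
  have hmono : StrictMonoOn a (Set.Iic k) := strictMonoOn_Iic_of_lt_succ hinc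
  refine ⟨a, h0, fun m hm => hinc m (by omega), fun x hx => ?_⟩
  rw [mem_Icc] at hx
  have hak : a (j + 1) ≤ a k := hmono.monotoneOn (by simp; omega) (by simp) (by omega)
  have hpos : a 0 < a (j + 1) := hmono (by simp) (by simp; omega) (Nat.succ_pos j)
  obtain ⟨i, hi, i', hi', rfl⟩ :=
    mem_sumset_image_range_iff.mp (hcov (mem_Icc.mpr ⟨Nat.zero_le x, by omega⟩))
  have below {l : ℕ} (hl : l ≤ k) (hal : a l < a (j + 1)) : l ≤ j := by
    have := (hmono.lt_iff_lt (by simpa using hl) (by simp; omega)).mp hal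
    omega
  exact mem_sumset_image_range_iff.mpr
    ⟨i, below hi (by omega), i', below hi' (by omega), rfl⟩

lemma isBasisRange_reflect_suffix (hj : j < k) : IsBasisRange (k - j - 1) (a k - a j - 1) := by
  have hmono : StrictMonoOn a (Set.Iic k) := strictMonoOn_Iic_of_lt_succ hinc
  have le_last {l : ℕ} (hl : l ≤ k) : a l ≤ a k :=
    hmono.monotoneOn (by simpa using hl) (by simp) hl
  refine ⟨fun i => a k - a (k - i), by simp, fun m hm => ?_, fun y hy => ?_⟩
  · have hstep : a (k - (m + 1)) < a (k - m) := hmono (by simp) (by simp) (by omega)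
    have hle : a (k - m) ≤ a k := le_last (by omega)
    dsimp only
    omega
  · rw [mem_Icc] at hy
    obtain ⟨i, hi, i', hi', hsum⟩ :=
      mem_sumset_image_range_iff.mp (hcov (mem_Icc.mpr ⟨Nat.zero_le (2 * a k - y), by omega⟩))
    have above {l : ℕ} (hl : l ≤ k) (hal : a j < a l) : j < l :=
      (hmono.lt_iff_lt (by simp; omega) (by simpa using hl)).mp hal
    have hik : a i ≤ a k := le_last hi
    have hi'k : a i' ≤ a k := le_last hi'
    have hjk : a j < a k := hmono (by simp; omega) (by simp) hj
    refine mem_sumset_image_range_iff.mpr ⟨k - i, ?_, k - i', ?_, ?_⟩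
    · exact Nat.le_sub_one_of_lt (Nat.sub_lt_sub_left hj (above hi (by omega)))
    · exact Nat.le_sub_one_of_lt (Nat.sub_lt_sub_left hj (above hi' (by omega)))
    · rw [Nat.sub_sub_self hi, Nat.sub_sub_self hi']
      omega

end RestrictedBasis

theorem n2star_odd_upper_bound (r : ℕ) (hr : 1 < r) :
    n2star (2 * r + 1) ≤ 2 * n2max (r - 1) + 2 * n2max r + 4 := by
  refine csSup_le' ?_
  rintro n ⟨a, h0, hinc, hcov, rfl⟩
  have hlow := (isBasisRange_prefix hinc hcov h0 (j := r) (by omega)).le_n2max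
  have hhigh := (isBasisRange_reflect_suffix hinc hcov (j := r + 1) (by omega)).le_n2max
  rw [show 2 * r + 1 - (r + 1) - 1 = r - 1 by omega] at hhigh
  omega
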